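/- arXiv:2508.15677 — 2 statements merged into one kernel-verified Lean document; each statement's English description precedes it below -/
import Mathlib

section
/- Let k ≥ 4 and let 2 ≤ n, n+2 ≤ m ≤ k−1. Let X be the graph obtained from the path v₁ — v₂ — ⋯ — v_k by adding one extra edge between v_n and v_m. Then the number of spanning 2-forests of X with one tree containing v₁ and the other containing v_k equals (k − m + n)(m − n + 1) − 1. -/
structure Multigraph where
  V : Type
  E : Type
  [fintypeV : Fintype V]
  [fintypeE : Fintype E]
  [decEqV : DecidableEq V]
  ends : E → Sym2 V

attribute [instance] Multigraph.fintypeV Multigraph.fintypeE Multigraph.decEqV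

namespace Multigraph

variable (G : Multigraph)

/-- Reachability in the spanning subgraph using only the edges in `S`. -/
def Reach (S : Set G.E) : G.V → G.V → Prop :=
  Relation.ReflTransGen (fun x y => ∃ e ∈ S, G.ends e = s(x, y))

/-- The multigraph is connected. -/
def Connected : Prop := ∀ x y : G.V, G.Reach Set.univ x y

/-- The edge set `S` is acyclic: every edge of `S` is a bridge of `S`. -/
def IsForest (S : Finset G.E) : Prop :=
  ∀ e ∈ S, ∀ x y : G.V, G.ends e = s(x, y) → ¬ G.Reach ((↑S : Set G.E) \ {e}) x y

/-- `S` is the edge set of a spanning tree. -/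
def IsSpanningTree (S : Finset G.E) : Prop :=
  G.IsForest S ∧ ∀ x y : G.V, G.Reach ↑S x y

/-- `S` is the edge set of a spanning 2-forest consisting of two trees, one
containing `u`, the other containing `v`, whose vertex sets partition the vertices. -/
def IsTwoForest (u v : G.V) (S : Finset G.E) : Prop :=
  G.IsForest S ∧ ¬ G.Reach ↑S u v ∧ ∀ x : G.V, G.Reach ↑S u x ∨ G.Reach ↑S v x

/-- The number of spanning trees. -/
noncomputable def treeCount : ℕ :=
  Nat.card {S : Finset G.E // G.IsSpanningTree S}

/-- The number of spanning 2-forests separating `u` and `v`. -/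
noncomputable def twoForestCount (u v : G.V) : ℕ :=
  Nat.card {S : Finset G.E // G.IsTwoForest u v S}

end Multigraph

/-- The path graph `v₁ — v₂ — ⋯ — v_k` (vertices encoded as `Fin k`, with `v_i`
corresponding to index `i - 1`) together with one extra edge between `v_n` and `v_m`. -/
def pathChord (k n m : ℕ) (hn : n - 1 < k) (hm : m - 1 < k) : Multigraph where
  V := Fin k
  E := Fin (k - 1) ⊕ Unit
  ends := fun e =>
    match e with
    | .inl i => s((⟨i.1, by have := i.isLt; omega⟩ : Fin k),
                  (⟨i.1 + 1, by have := i.isLt; omega⟩ : Fin k))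
    | .inr _ => s((⟨n - 1, hn⟩ : Fin k), (⟨m - 1, hm⟩ : Fin k))

/-! Index the path edges by `i : Fin (k - 1)` (edge `i` joins `i` and `i + 1`) and write
`a = n - 1`, `b = m - 1` for the ends of the chord, so that the edges `a, …, b - 1` close a cycle
with it. A two-forest separating `0` and `k - 1` either omits the chord and one path edge
(`k - 1` choices), or keeps the chord and omits one cycle edge and one path edge off the cycle
(`(b - a)(k - 1 - (b - a))` choices); the sum is `(k - m + n)(m - n + 1) - 1`.

That these edge sets are two-forests is checked with interval cuts: an interval of vertices left by
no edge of `S` cannot be left along `S`. Conversely every two-forest misses the edges omitted by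
one of them, and a two-forest has no proper spanning subset, so it is that one. -/

namespace Multigraph

variable {G : Multigraph} {S T : Set G.E} {x y : G.V}

theorem Reach.mono (hST : S ⊆ T) (h : G.Reach S x y) : G.Reach T x y :=
  Relation.ReflTransGen.mono (fun _ _ ⟨e, he, hends⟩ => ⟨e, hST he, hends⟩) _ _ h

theorem Reach.trans {z : G.V} (hxy : G.Reach S x y) (hyz : G.Reach S y z) : G.Reach S x z :=
  Relation.ReflTransGen.trans hxy hyz

theorem Reach.symm (h : G.Reach S x y) : G.Reach S y x := by
  induction h with
  | refl => exact .refl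
  | tail _ hstep ih =>
    obtain ⟨e, he, hends⟩ := hstep
    exact ih.head ⟨e, he, hends.trans Sym2.eq_swap⟩

theorem Reach.of_ends {e : G.E} (he : e ∈ S) (hends : G.ends e = s(x, y)) : G.Reach S x y :=
  Relation.ReflTransGen.single ⟨e, he, hends⟩

theorem Reach.mem_of_mem {C : Set G.V}
    (hC : ∀ e ∈ S, ∀ z w, G.ends e = s(z, w) → z ∈ C → w ∈ C)
    (h : G.Reach S x y) (hx : x ∈ C) : y ∈ C := by
  induction h with
  | refl => exact hx
  | tail _ hstep ih =>
    obtain ⟨e, he, hends⟩ := hstep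
    exact hC e he _ _ hends ih

theorem isForest_of_exists {S : Finset G.E}
    (h : ∀ e ∈ S, ∃ x y, G.ends e = s(x, y) ∧ ¬ G.Reach ((↑S : Set G.E) \ {e}) x y) :
    G.IsForest S := by
  intro e he x' y' hends' hreach
  obtain ⟨x, y, hends, hxy⟩ := h e he
  rcases Sym2.eq_iff.mp (hends.symm.trans hends') with ⟨rfl, rfl⟩ | ⟨rfl, rfl⟩
  · exact hxy hreach
  · exact hxy hreach.symm

/-- If `T` misses an edge `e` of `S`, the ends of `e` can reach neither the same root along `T`
(`e` is a bridge of `S`) nor different roots (`u` and `v` are separated in `S`). -/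
theorem IsTwoForest.eq_of_subset {u v : G.V} {S T : Finset G.E} (hS : G.IsTwoForest u v S)
    (hTS : T ⊆ S) (hT : ∀ x, G.Reach ↑T u x ∨ G.Reach ↑T v x) : T = S := by
  refine hTS.antisymm fun e he => ?_
  by_contra heT
  obtain ⟨⟨x, y⟩, hends⟩ := Sym2.mk_surjective (G.ends e)
  have hsub : (↑T : Set G.E) ⊆ ↑S \ {e} := fun f hf => ⟨hTS hf, fun hfe => heT (hfe ▸ hf)⟩
  have hsubS : (↑T : Set G.E) ⊆ ↑S := hsub.trans Set.sdiff_subset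
  have hbridge := hS.1 e he x y hends.symm
  have hedge : G.Reach ↑S x y := .of_ends he hends.symm
  rcases hT x with hx | hx <;> rcases hT y with hy | hy
  · exact hbridge ((hx.symm.trans hy).mono hsub)
  · exact hS.2.1 (((hx.mono hsubS).trans hedge).trans (hy.symm.mono hsubS))
  · exact hS.2.1 (((hy.mono hsubS).trans hedge.symm).trans (hx.symm.mono hsubS))
  · exact hbridge ((hx.symm.trans hy).mono hsub)

end Multigraph

namespace pathChord

open Multigraph Finset

variable {k n m : ℕ} {hn : n - 1 < k} {hm : m - 1 < k}

theorem reach_of_forall_mem_of_le {S : Set (Fin (k - 1) ⊕ Unit)} {x y : ℕ} {hx : x < k}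
    {hy : y < k} (hxy : x ≤ y) (h : ∀ l : Fin (k - 1), x ≤ l.1 → l.1 < y → Sum.inl l ∈ S) :
    (pathChord k n m hn hm).Reach S ⟨x, hx⟩ ⟨y, hy⟩ := by
  induction y, hxy using Nat.le_induction with
  | base => exact .refl
  | succ j hxj ih =>
    refine (ih (hy := by omega) fun l h1 h2 => h l h1 (by omega)).trans ?_
    exact .of_ends (e := Sum.inl ⟨j, by omega⟩) (h _ hxj (by simp)) rfl

theorem reach_of_forall_mem {S : Set (Fin (k - 1) ⊕ Unit)} {x y : ℕ} {hx : x < k}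
    {hy : y < k} (h : ∀ l : Fin (k - 1), min x y ≤ l.1 → l.1 < max x y → Sum.inl l ∈ S) :
    (pathChord k n m hn hm).Reach S ⟨x, hx⟩ ⟨y, hy⟩ := by
  rcases le_total x y with hxy | hyx
  · exact reach_of_forall_mem_of_le hxy fun l h1 h2 => h l (by omega) (by omega)
  · exact (reach_of_forall_mem_of_le hyx fun l h1 h2 => h l (by omega) (by omega)).symm

theorem exists_notMem_of_not_reach {S : Set (Fin (k - 1) ⊕ Unit)} {x y : ℕ} {hx : x < k}
    {hy : y < k} (h : ¬ (pathChord k n m hn hm).Reach S ⟨x, hx⟩ ⟨y, hy⟩) :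
    ∃ l : Fin (k - 1), min x y ≤ l.1 ∧ l.1 < max x y ∧ Sum.inl l ∉ S := by
  contrapose! h
  exact reach_of_forall_mem h

theorem reach_chord {S : Set (Fin (k - 1) ⊕ Unit)} (h : Sum.inr () ∈ S) :
    (pathChord k n m hn hm).Reach S ⟨n - 1, hn⟩ ⟨m - 1, hm⟩ :=
  .of_ends (e := Sum.inr ()) h rfl

theorem not_reach_of_Icc {S : Set (Fin (k - 1) ⊕ Unit)} {p q : ℕ}
    (hpath : ∀ l : Fin (k - 1), Sum.inl l ∈ S → (l.1 ∈ Set.Icc p q ↔ l.1 + 1 ∈ Set.Icc p q))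
    (hchord : Sum.inr () ∈ S → (n - 1 ∈ Set.Icc p q ↔ m - 1 ∈ Set.Icc p q))
    {x y : Fin k} (hxy : x.1 ∈ Set.Icc p q ↔ y.1 ∉ Set.Icc p q) :
    ¬ (pathChord k n m hn hm).Reach S x y := by
  have hclosed : ∀ {z w : Fin k}, (pathChord k n m hn hm).Reach S z w →
      z.1 ∈ Set.Icc p q → w.1 ∈ Set.Icc p q := by
    refine fun h hz => Reach.mem_of_mem (G := pathChord k n m hn hm)
      (C := Fin.val ⁻¹' Set.Icc p q) ?_ h hz
    rintro (l | ⟨⟩) he z w hends hz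
    · rcases Sym2.eq_iff.mp hends with ⟨rfl, rfl⟩ | ⟨rfl, rfl⟩
      exacts [(hpath l he).mp hz, (hpath l he).mpr hz]
    · rcases Sym2.eq_iff.mp hends with ⟨rfl, rfl⟩ | ⟨rfl, rfl⟩
      exacts [(hchord he).mp hz, (hchord he).mpr hz]
  intro h
  by_cases hx : x.1 ∈ Set.Icc p q
  · exact hxy.1 hx (hclosed h hx)
  · exact hx (hclosed h.symm (not_not.1 (mt hxy.2 hx)))

theorem isForest_of_not_reach {S : Finset (Fin (k - 1) ⊕ Unit)}
    (hpath : ∀ l : Fin (k - 1), Sum.inl l ∈ S →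
      ¬ (pathChord k n m hn hm).Reach (S.erase (Sum.inl l) : Set (Fin (k - 1) ⊕ Unit))
        ⟨l.1, by have := l.isLt; omega⟩ ⟨l.1 + 1, by have := l.isLt; omega⟩)
    (hchord : Sum.inr () ∈ S →
      ¬ (pathChord k n m hn hm).Reach (S.erase (Sum.inr ()) : Set (Fin (k - 1) ⊕ Unit))
        ⟨n - 1, hn⟩ ⟨m - 1, hm⟩) :
    (pathChord k n m hn hm).IsForest S := by
  refine isForest_of_exists ?_
  rintro (l | ⟨⟨⟩⟩) he
  · refine ⟨_, _, rfl, fun h => hpath l he ?_⟩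
    rwa [coe_erase]
  · refine ⟨_, _, rfl, fun h => hchord he ?_⟩
    rwa [coe_erase]

variable (k) in
def withoutChord (i : Fin (k - 1)) : Finset (Fin (k - 1) ⊕ Unit) :=
  {Sum.inl i, Sum.inr ()}ᶜ

variable (k) in
def withChord (i j : Fin (k - 1)) : Finset (Fin (k - 1) ⊕ Unit) :=
  {Sum.inl i, Sum.inl j}ᶜ

variable (k n m) in
def cycleEdges : Finset (Fin (k - 1)) :=
  univ.filter fun i => n - 1 ≤ i.1 ∧ i.1 < m - 1

theorem inl_mem_withoutChord {i l : Fin (k - 1)} :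
    Sum.inl l ∈ withoutChord k i ↔ l.1 ≠ i.1 := by
  simp [withoutChord, Fin.val_ne_iff]

theorem inr_notMem_withoutChord {i : Fin (k - 1)} : Sum.inr () ∉ withoutChord k i := by
  simp [withoutChord]

theorem inl_mem_withChord {i j l : Fin (k - 1)} :
    Sum.inl l ∈ withChord k i j ↔ l.1 ≠ i.1 ∧ l.1 ≠ j.1 := by
  simp [withChord, Fin.val_ne_iff]

theorem inr_mem_withChord {i j : Fin (k - 1)} : Sum.inr () ∈ withChord k i j := by
  simp [withChord]

theorem mem_cycleEdges {i : Fin (k - 1)} :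
    i ∈ cycleEdges k n m ↔ n - 1 ≤ i.1 ∧ i.1 < m - 1 := by
  simp [cycleEdges]

theorem subset_withoutChord {S : Finset (Fin (k - 1) ⊕ Unit)} {i : Fin (k - 1)}
    (hi : Sum.inl i ∉ S) (hc : Sum.inr () ∉ S) : S ⊆ withoutChord k i := by
  rintro (l | ⟨⟩) hl
  · exact inl_mem_withoutChord.2 fun h => hi (Fin.ext h ▸ hl)
  · exact absurd hl hc

theorem subset_withChord {S : Finset (Fin (k - 1) ⊕ Unit)} {i j : Fin (k - 1)}
    (hi : Sum.inl i ∉ S) (hj : Sum.inl j ∉ S) : S ⊆ withChord k i j := by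
  rintro (l | ⟨⟩) hl
  · exact inl_mem_withChord.2 ⟨fun h => hi (Fin.ext h ▸ hl), fun h => hj (Fin.ext h ▸ hl)⟩
  · exact inr_mem_withChord

theorem isTwoForest_withoutChord (hk : 0 < k) (i : Fin (k - 1)) :
    (pathChord k n m hn hm).IsTwoForest ⟨0, hk⟩ ⟨k - 1, by omega⟩ (withoutChord k i) := by
  have hik := i.isLt
  refine ⟨isForest_of_not_reach (fun l _ => ?_) (fun h => absurd h inr_notMem_withoutChord), ?_,
    fun ⟨t, ht⟩ => ?_⟩
  · refine not_reach_of_Icc (p := 0) (q := l.1) (fun l' hl' => ?_)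
      (fun h => absurd (mem_of_mem_erase h) inr_notMem_withoutChord) (by simp)
    rw [mem_coe, mem_erase, ne_eq, Sum.inl.injEq, ← Fin.val_inj, inl_mem_withoutChord] at hl'
    simp only [Set.mem_Icc]
    omega
  · refine not_reach_of_Icc (p := 0) (q := i.1) (fun l' hl' => ?_)
      (fun h => absurd h inr_notMem_withoutChord) (by simp; omega)
    have := inl_mem_withoutChord.1 hl'
    simp only [Set.mem_Icc]
    omega
  · rcases le_or_gt t i.1 with hti | hti
    · exact .inl (reach_of_forall_mem fun l _ _ => inl_mem_withoutChord.2 (by omega))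
    · exact .inr (reach_of_forall_mem fun l _ _ => inl_mem_withoutChord.2 (by omega))

section withChord

variable {i j : Fin (k - 1)} (hi : i ∈ cycleEdges k n m) (hj : j ∉ cycleEdges k n m)
include hi hj

theorem isForest_withChord : (pathChord k n m hn hm).IsForest (withChord k i j) := by
  rw [mem_cycleEdges] at hi hj
  refine isForest_of_not_reach (fun l hl => ?_) (fun _ => ?_)
  · have hl := inl_mem_withChord.1 hl
    have hcut : ∀ p q : ℕ, (∀ l' : Fin (k - 1), l'.1 ≠ l.1 → l'.1 ≠ i.1 → l'.1 ≠ j.1 →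
        (p ≤ l'.1 ∧ l'.1 ≤ q ↔ p ≤ l'.1 + 1 ∧ l'.1 + 1 ≤ q)) →
        (p ≤ n - 1 ∧ n - 1 ≤ q ↔ p ≤ m - 1 ∧ m - 1 ≤ q) →
        (p ≤ l.1 ∧ l.1 ≤ q ↔ ¬ (p ≤ l.1 + 1 ∧ l.1 + 1 ≤ q)) →
        ¬ (pathChord k n m hn hm).Reach
          ((withChord k i j).erase (Sum.inl l) : Set (Fin (k - 1) ⊕ Unit))
          ⟨l.1, by have := l.isLt; omega⟩ ⟨l.1 + 1, by have := l.isLt; omega⟩ := by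
      refine fun p q hpath hchord hl =>
        not_reach_of_Icc (fun l' hl' => ?_) (fun _ => hchord) hl
      rw [mem_coe, mem_erase, ne_eq, Sum.inl.injEq, ← Fin.val_inj, inl_mem_withChord] at hl'
      exact hpath l' hl'.1 hl'.2.1 hl'.2.2
    by_cases hlc : n - 1 ≤ l.1 ∧ l.1 < m - 1
    · rcases lt_or_gt_of_ne hl.1 with hli | hli
      · exact hcut (l.1 + 1) i.1 (fun _ _ _ _ => by omega) (by omega) (by omega)
      · exact hcut (i.1 + 1) l.1 (fun _ _ _ _ => by omega) (by omega) (by omega)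
    · exact hcut 0 l.1 (fun _ _ _ _ => by omega) (by omega) (by omega)
  · refine not_reach_of_Icc (p := 0) (q := i.1) (fun l' hl' => ?_)
      (fun h => absurd (mem_erase.1 h).1 (by simp)) (by simp; omega)
    rw [mem_coe, mem_erase, inl_mem_withChord] at hl'
    simp only [Set.mem_Icc]
    omega

theorem not_reach_withChord (hk : 0 < k) :
    ¬ (pathChord k n m hn hm).Reach (withChord k i j : Set (Fin (k - 1) ⊕ Unit))
      ⟨0, hk⟩ ⟨k - 1, by omega⟩ := by
  rw [mem_cycleEdges] at hi hj
  have := j.isLt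
  refine not_reach_of_Icc (p := 0) (q := j.1) (fun l hl => ?_) (fun _ => ?_) (by simp; omega)
  · have := inl_mem_withChord.1 hl
    simp only [Set.mem_Icc]
    omega
  · simp only [Set.mem_Icc]
    omega

theorem reach_or_reach_withChord (hk : 0 < k) (t : Fin k) :
    (pathChord k n m hn hm).Reach (withChord k i j : Set (Fin (k - 1) ⊕ Unit)) ⟨0, hk⟩ t ∨
      (pathChord k n m hn hm).Reach (withChord k i j : Set (Fin (k - 1) ⊕ Unit))
        ⟨k - 1, by omega⟩ t := by
  rw [mem_cycleEdges] at hi hj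
  obtain ⟨t, ht⟩ := t
  have path : ∀ {x y : ℕ} {hx : x < k} {hy : y < k}, (∀ l : Fin (k - 1), min x y ≤ l.1 →
      l.1 < max x y → l.1 ≠ i.1 ∧ l.1 ≠ j.1) →
      (pathChord k n m hn hm).Reach (withChord k i j : Set (Fin (k - 1) ⊕ Unit))
        ⟨x, hx⟩ ⟨y, hy⟩ :=
    fun h => reach_of_forall_mem fun l h1 h2 => inl_mem_withChord.2 (h l h1 h2)
  have chord : (pathChord k n m hn hm).Reach (withChord k i j : Set (Fin (k - 1) ⊕ Unit))
      ⟨n - 1, hn⟩ ⟨m - 1, hm⟩ :=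
    reach_chord inr_mem_withChord
  rcases lt_or_ge j.1 (n - 1) with hja | hja
  · rcases le_or_gt t j.1 with htj | htj
    · exact .inl (path fun l _ _ => by omega)
    rcases le_or_gt t i.1 with hti | hti
    · exact .inr (((path fun l _ _ => by omega).trans chord.symm).trans
        (path fun l _ _ => by omega))
    · exact .inr (path fun l _ _ => by omega)
  · rcases le_or_gt t i.1 with hti | hti
    · exact .inl (path fun l _ _ => by omega)
    rcases le_or_gt t j.1 with htj | htj
    · exact .inl (((path fun l _ _ => by omega).trans chord).trans
        (path fun l _ _ => by omega))
    · exact .inr (path fun l _ _ => by omega)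

theorem isTwoForest_withChord (hk : 0 < k) :
    (pathChord k n m hn hm).IsTwoForest ⟨0, hk⟩ ⟨k - 1, by omega⟩ (withChord k i j) :=
  ⟨isForest_withChord hi hj, not_reach_withChord hi hj hk, reach_or_reach_withChord hi hj hk⟩

end withChord

theorem isTwoForest_iff (hk : 0 < k) (hnm : n ≤ m) {S : Finset (Fin (k - 1) ⊕ Unit)} :
    (pathChord k n m hn hm).IsTwoForest ⟨0, hk⟩ ⟨k - 1, by omega⟩ S ↔
      (∃ i, S = withoutChord k i) ∨
        ∃ i ∈ cycleEdges k n m, ∃ j ∉ cycleEdges k n m, S = withChord k i j := by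
  refine ⟨fun hS => ?_, ?_⟩
  · by_cases hc : Sum.inr () ∈ S
    · have hbridge : ¬ (pathChord k n m hn hm).Reach
          (S.erase (Sum.inr ()) : Set (Fin (k - 1) ⊕ Unit)) ⟨n - 1, hn⟩ ⟨m - 1, hm⟩ := by
        rw [coe_erase]
        exact hS.1 _ hc _ _ rfl
      obtain ⟨i, hi₁, hi₂, hiS⟩ := exists_notMem_of_not_reach hbridge
      replace hiS : Sum.inl i ∉ S := fun h => hiS (mem_erase.2 ⟨by simp, h⟩)
      have hi : i ∈ cycleEdges k n m := mem_cycleEdges.2 (by omega)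
      obtain ⟨j, hj, hjS⟩ : ∃ j, j ∉ cycleEdges k n m ∧ Sum.inl j ∉ S := by
        by_contra! h
        simp only [mem_cycleEdges] at h
        exact hS.2.1 (((reach_of_forall_mem fun l _ _ => h l (by omega)).trans
          (reach_chord hc)).trans (reach_of_forall_mem fun l _ _ => h l (by omega)))
      exact .inr ⟨i, hi, j, hj,
        (isTwoForest_withChord hi hj hk).eq_of_subset (subset_withChord hiS hjS) hS.2.2⟩
    · obtain ⟨i, -, -, hiS⟩ := exists_notMem_of_not_reach hS.2.1
      exact .inl ⟨i, (isTwoForest_withoutChord hk i).eq_of_subset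
        (subset_withoutChord hiS hc) hS.2.2⟩
  · rintro (⟨i, rfl⟩ | ⟨i, hi, j, hj, rfl⟩)
    exacts [isTwoForest_withoutChord hk i, isTwoForest_withChord hi hj hk]

variable (k n m) in
def twoForests : Finset (Finset (Fin (k - 1) ⊕ Unit)) :=
  univ.image (withoutChord k) ∪
    (cycleEdges k n m ×ˢ (cycleEdges k n m)ᶜ).image fun p => withChord k p.1 p.2

theorem mem_twoForests {S : Finset (Fin (k - 1) ⊕ Unit)} :
    S ∈ twoForests k n m ↔ (∃ i, S = withoutChord k i) ∨
      ∃ i ∈ cycleEdges k n m, ∃ j ∉ cycleEdges k n m, S = withChord k i j := by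
  simp [twoForests, eq_comm, and_assoc]

theorem withoutChord_injective : Function.Injective (withoutChord k) :=
  fun _ _ h => by_contra fun hne =>
    inl_mem_withoutChord.1 (h ▸ inl_mem_withoutChord.2 (Fin.val_ne_iff.2 hne)) rfl

theorem withChord_injOn : Set.InjOn (fun p : Fin (k - 1) × Fin (k - 1) => withChord k p.1 p.2)
    ↑(cycleEdges k n m ×ˢ (cycleEdges k n m)ᶜ) := by
  rintro ⟨i, j⟩ hij ⟨i', j'⟩ hij' h
  simp only [coe_product, coe_compl, Set.mem_prod, mem_coe, Set.mem_compl_iff] at hij hij'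
  have h' : ({Sum.inl i, Sum.inl j} : Finset _) = {Sum.inl i', Sum.inl j'} := compl_injective h
  have hi : Sum.inl i ∈ ({Sum.inl i', Sum.inl j'} : Finset (Fin (k - 1) ⊕ Unit)) := by
    simp [← h']
  have hj : Sum.inl j ∈ ({Sum.inl i', Sum.inl j'} : Finset (Fin (k - 1) ⊕ Unit)) := by
    simp [← h']
  simp only [mem_insert, mem_singleton, Sum.inl.injEq] at hi hj
  have hii : i = i' := hi.resolve_right fun h => hij'.2 (h ▸ hij.1)
  have hjj : j = j' := hj.resolve_left fun h => hij.2 (h ▸ hij'.1)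
  rw [hii, hjj]

theorem card_cycleEdges (hmk : m ≤ k) : #(cycleEdges k n m) = (m - 1) - (n - 1) := by
  rw [← card_map Fin.valEmbedding, ← Nat.card_Ico (n - 1) (m - 1)]
  congr 1
  ext t
  simp only [cycleEdges, mem_map, mem_filter, mem_univ, true_and, Fin.valEmbedding_apply,
    mem_Ico]
  exact ⟨fun ⟨l, hl, hlt⟩ => hlt ▸ hl, fun ht => ⟨⟨t, by omega⟩, ht, rfl⟩⟩

theorem card_twoForests :
    #(twoForests k n m) = (k - 1) + #(cycleEdges k n m) * (k - 1 - #(cycleEdges k n m)) := by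
  have hdisj : Disjoint (univ.image (withoutChord k))
      ((cycleEdges k n m ×ˢ (cycleEdges k n m)ᶜ).image fun p => withChord k p.1 p.2) := by
    simp only [disjoint_left, mem_image, mem_univ, true_and, not_exists, not_and]
    rintro _ ⟨i, rfl⟩ _ _ h
    exact inr_notMem_withoutChord (h ▸ inr_mem_withChord)
  rw [twoForests, card_union_of_disjoint hdisj, card_image_of_injective _ withoutChord_injective,
    card_image_of_injOn withChord_injOn, card_product, card_compl, card_univ, Fintype.card_fin]

theorem twoForestCount_eq (hk : 0 < k) (hnm : n ≤ m) :
    (pathChord k n m hn hm).twoForestCount ⟨0, hk⟩ ⟨k - 1, by omega⟩ =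
      (k - 1) + ((m - 1) - (n - 1)) * (k - 1 - ((m - 1) - (n - 1))) := by
  rw [← card_cycleEdges (k := k) (n := n) (m := m) (by omega), ← card_twoForests,
    ← Nat.card_eq_finsetCard]
  unfold Multigraph.twoForestCount
  exact Nat.card_congr <| Equiv.subtypeEquivRight fun _ =>
    (isTwoForest_iff hk hnm).trans mem_twoForests.symm

end pathChord

/-- For `k ≥ 4` and `2 ≤ n`, `n + 2 ≤ m ≤ k - 1`, the number of spanning 2-forests of
the path with one chord `{v_n, v_m}`, separating `v₁` and `v_k`, equals
`(k - m + n)(m - n + 1) - 1`. -/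
theorem stmt_3 (k n m : ℕ) (hn : 2 ≤ n) (hnm : n + 2 ≤ m) (hm : m ≤ k - 1) :
    (pathChord k n m (by omega) (by omega)).twoForestCount
        ⟨0, by omega⟩ ⟨k - 1, by omega⟩ =
      (k - m + n) * (m - n + 1) - 1 := by
  rw [pathChord.twoForestCount_eq (by omega) (by omega), show (m - 1) - (n - 1) = m - n by omega]
  have hpos : 1 ≤ (k - m + n) * (m - n + 1) := Nat.mul_pos (by omega) (by omega)
  zify [show m - n ≤ k - 1 by omega, show n ≤ m by omega, show m ≤ k by omega,
    show 1 ≤ k by omega, hpos]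
  ring
end

section
/- For every integer n ≥ 2, the identity ∑_{i=1}^{n−1} C(n−2, i−1) · i^{i−2} · (n−i)^{n−i−2} = 2 n^{n−3} holds, where the terms with i = 1 or i = n−1 are interpreted with 1^{−1} = 1 (i.e. the factor i^{i−2} equals 1 when i = 1). Equivalently, n² · ∑_{i=1}^{n−1} C(n−2, i−1) i^{i−2} (n−i)^{n−i−2} = 2 n^{n−1}. -/
/-!
Write `n = m + 2` and `T k = (k + 1)^(k - 1)`, so that the sum is
`S = ∑_{i+j=m} C(m,i) T i T j`. Since `(1 + j)^j = (1 + j) T j`, Abel's identity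
`A_m(x,y) := ∑_{i+j=m} C(m,i) x (x+i)^(i-1) (y+j)^j = (x+y+m)^m` at `x = y = 1` reads
`(m+2)^m = S + ∑_{i+j=m} C(m,i) j T i T j`, and by the symmetry `i ↔ j` the last sum is `m S / 2`.
Hence `(m + 2) S = 2 (m + 2)^m`.

Abel's identity is proved by induction on `m`, together with the shift
invariance `Q_m(x+1,y) = Q_m(x,y+1)` of `Q_m(x,y) = ∑_{i+j=m} C(m,i) (x+i)^i (y+j)^j`.
Pascal's rule and the splitting `x+y+m+1 = (x+i) + (y+1+j)` write `A_{m+1}(x,y)` and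
`(x+y+m+1) A_m(x,y+1)` as one common sum plus `x Q_m(x+1,y)`, resp. `x Q_m(x,y+1)`;
and `(x+i)^i = x (x+i)^(i-1) + i (x+i)^(i-1)` gives `Q_{m+1}(x,y) = A_{m+1}(x,y) + (m+1) Q_m(x+1,y)`.
-/

open Finset Finset.Nat

/-- `x (x + k)^(k - 1)`, read as `x · x⁻¹ = 1` at `k = 0`. -/
def abelTerm (x : ℕ) : ℕ → ℕ
  | 0 => 1
  | k + 1 => x * (x + k + 1) ^ k

def abelSum (n x y : ℕ) : ℕ :=
  ∑ p ∈ antidiagonal n, n.choose p.1 * (abelTerm x p.1 * (y + p.2) ^ p.2)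

def binomPowSum (n x y : ℕ) : ℕ :=
  ∑ p ∈ antidiagonal n, n.choose p.1 * ((x + p.1) ^ p.1 * (y + p.2) ^ p.2)

theorem abelTerm_succ (x k : ℕ) : abelTerm x (k + 1) = x * (x + 1 + k) ^ k := by
  rw [abelTerm, add_right_comm]

theorem abelTerm_mul_add_self (x k : ℕ) : abelTerm x k * (x + k) = x * (x + k) ^ k := by
  cases k with
  | zero => simp [abelTerm]
  | succ k => rw [abelTerm, pow_succ]; ring

theorem abelTerm_one (k : ℕ) : abelTerm 1 k = (k + 1) ^ (k - 1) := by
  cases k with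
  | zero => rfl
  | succ k => rw [abelTerm_succ, one_mul, Nat.add_sub_cancel]; ring

theorem binomPowSum_succ (n x y : ℕ) :
    binomPowSum (n + 1) x y = abelSum (n + 1) x y + (n + 1) * binomPowSum n (x + 1) y := by
  simp only [binomPowSum, abelSum, sum_antidiagonal_succ, mul_sum]
  rw [add_assoc, ← sum_add_distrib]
  congr 1
  refine sum_congr rfl fun p _ => ?_
  rw [abelTerm_succ, ← mul_assoc (n + 1), Nat.add_one_mul_choose_eq]
  ring

theorem abelSum_succ_add (n x y : ℕ) :
    abelSum (n + 1) x y + x * binomPowSum n x (y + 1) =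
      (x + y + (n + 1)) * abelSum n x (y + 1) + x * binomPowSum n (x + 1) y := by
  set R := ∑ p ∈ antidiagonal n, n.choose p.1 * (abelTerm x p.1 * (y + 1 + p.2) ^ (p.2 + 1))
  have pascal : abelSum (n + 1) x y = R + x * binomPowSum n (x + 1) y := by
    have := sum_antidiagonal_choose_succ_mul (R := ℕ) (fun i j => abelTerm x i * (y + j) ^ j) n
    simp only [Nat.cast_id] at this
    rw [abelSum, this, binomPowSum, mul_sum]
    congr 1
    · refine sum_congr rfl fun p _ => ?_
      rw [add_assoc y 1, add_comm 1 p.2]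
    · refine sum_congr rfl fun p hp => ?_
      rw [← Nat.choose_symm_of_eq_add (mem_antidiagonal.1 hp).symm, abelTerm_succ]
      ring
  have split : (x + y + (n + 1)) * abelSum n x (y + 1) = x * binomPowSum n x (y + 1) + R := by
    simp only [R, abelSum, binomPowSum, mul_sum, ← sum_add_distrib]
    refine sum_congr rfl fun p hp => ?_
    have hn : x + y + (n + 1) = (x + p.1) + (y + 1 + p.2) := by
      rw [← mem_antidiagonal.1 hp]; ring
    rw [hn, pow_succ]
    linear_combination (n.choose p.1 * (y + 1 + p.2) ^ p.2) * abelTerm_mul_add_self x p.1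
  rw [pascal, split]; ring

theorem abelSum_eq_and_binomPowSum_shift (n : ℕ) :
    (∀ x y, abelSum n x y = (x + y + n) ^ n) ∧
      ∀ x y, binomPowSum n (x + 1) y = binomPowSum n x (y + 1) := by
  induction n with
  | zero => simp [abelSum, binomPowSum, abelTerm]
  | succ n ih =>
    obtain ⟨hA, hQ⟩ := ih
    have hA' : ∀ x y, abelSum (n + 1) x y = (x + y + (n + 1)) ^ (n + 1) := fun x y => by
      have := abelSum_succ_add n x y
      rw [hQ, hA, add_left_inj] at this
      rw [this, show x + (y + 1) + n = x + y + (n + 1) by ring, ← pow_succ']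
    refine ⟨hA', fun x y => ?_⟩
    rw [binomPowSum_succ, binomPowSum_succ, hA', hA', hQ, add_assoc x 1 y, add_comm 1 y]

theorem abelSum_eq (n x y : ℕ) : abelSum n x y = (x + y + n) ^ n :=
  (abelSum_eq_and_binomPowSum_shift n).1 x y

theorem add_two_mul_sum_choose_mul_abelTerm_one (m : ℕ) :
    (m + 2) * ∑ p ∈ antidiagonal m, m.choose p.1 * (abelTerm 1 p.1 * abelTerm 1 p.2) =
      2 * (m + 2) ^ m := by
  set S := ∑ p ∈ antidiagonal m, m.choose p.1 * (abelTerm 1 p.1 * abelTerm 1 p.2)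
  set W := ∑ p ∈ antidiagonal m, m.choose p.1 * (abelTerm 1 p.1 * abelTerm 1 p.2) * p.2
  have weight_swap : ∑ p ∈ antidiagonal m, m.choose p.1 * (abelTerm 1 p.1 * abelTerm 1 p.2) * p.1
      = W := by
    rw [← sum_antidiagonal_swap]
    refine sum_congr rfl fun p hp => ?_
    rw [Prod.fst_swap, Prod.snd_swap, Nat.choose_symm_of_eq_add (mem_antidiagonal.1 hp).symm]
    ring
  have weight_total : m * S = W + W := by
    nth_rewrite 1 [← weight_swap]
    rw [← sum_add_distrib, mul_sum]
    refine sum_congr rfl fun p hp => ?_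
    rw [← mem_antidiagonal.1 hp]
    ring
  have abel : abelSum m 1 1 = S + W := by
    rw [abelSum, ← sum_add_distrib]
    refine sum_congr rfl fun p _ => ?_
    linear_combination (m.choose p.1 * abelTerm 1 p.1) * (abelTerm_mul_add_self 1 p.2).symm
  calc (m + 2) * S = 2 * S + m * S := by ring
    _ = 2 * abelSum m 1 1 := by rw [weight_total, abel]; ring
    _ = 2 * (m + 2) ^ m := by rw [abelSum_eq]; ring

/-- For every `n ≥ 2`,
`∑_{i=1}^{n-1} C(n-2, i-1) · i^{i-2} · (n-i)^{n-i-2} = 2 n^{n-3}`, where the terms with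
`i = 1` or `i = n - 1` use the convention `1^{-1} = 1` (encoded by truncated
natural-number subtraction in the exponents), stated in the equivalent form
`n² · ∑_{i=1}^{n-1} C(n-2, i-1) i^{i-2} (n-i)^{n-i-2} = 2 n^{n-1}`. -/
theorem stmt_8 (n : ℕ) (hn : 2 ≤ n) :
    n ^ 2 * ∑ i ∈ Finset.Icc 1 (n - 1),
        Nat.choose (n - 2) (i - 1) * i ^ (i - 2) * (n - i) ^ (n - i - 2) =
      2 * n ^ (n - 1) := by
  obtain ⟨m, rfl⟩ : ∃ m, n = m + 2 := ⟨n - 2, by omega⟩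
  have reindex : ∑ i ∈ Icc 1 (m + 2 - 1),
        (m + 2 - 2).choose (i - 1) * i ^ (i - 2) * (m + 2 - i) ^ (m + 2 - i - 2) =
      ∑ p ∈ antidiagonal m, m.choose p.1 * (abelTerm 1 p.1 * abelTerm 1 p.2) := by
    rw [sum_antidiagonal_eq_sum_range_succ_mk, ← Ico_add_one_right_eq_Icc, sum_Ico_eq_sum_range]
    refine sum_congr (by simp) fun k hk => ?_
    have hk : k ≤ m := Nat.lt_succ_iff.mp (mem_range.mp hk)
    rw [abelTerm_one, abelTerm_one, mul_assoc]
    congr 3 <;> omega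
  calc (m + 2) ^ 2 * _ = (m + 2) * ((m + 2) * ∑ p ∈ antidiagonal m,
        m.choose p.1 * (abelTerm 1 p.1 * abelTerm 1 p.2)) := by rw [reindex]; ring
    _ = 2 * (m + 2) ^ (m + 2 - 1) := by
      rw [add_two_mul_sum_choose_mul_abelTerm_one, show m + 2 - 1 = m + 1 by omega, pow_succ]; ring
end
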